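/- Let X be an m×n real matrix, let {p_ij} be sampling probabilities satisfying p_ij ≥ (β/2)·(X_ij²/‖X‖_F² + |X_ij|/Σ_{k,l}|X_kl|) for all i,j and some β ∈ (0,1], and let (I,J) be a random index pair with ℙ[(I,J)=(i,j)] = p_ij. Define the random matrix M = (X_{IJ}/p_{IJ})·e_I e_J^T − X. Then ‖E[M^T M]‖₂ ≤ (2m/β)·‖X‖_F². -/

import Mathlib

open scoped BigOperators Matrix

/-- Spectral norm (ℓ₂ operator norm) of a real matrix. -/
noncomputable def specNorm {a b : ℕ} (A : Matrix (Fin a) (Fin b) ℝ) : ℝ :=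
  ‖LinearMap.toContinuousLinearMap (Matrix.toEuclideanLin A)‖

/-- Frobenius norm of a real matrix. -/
noncomputable def frobNorm {a b : ℕ} (A : Matrix (Fin a) (Fin b) ℝ) : ℝ :=
  Real.sqrt (∑ i, ∑ j, (A i j) ^ 2)

/-- The sparsification operator of Algorithm 1 applied to the sample `ω`. -/
noncomputable def sampleOp {m n s : ℕ} (X : Matrix (Fin m) (Fin n) ℝ)
    (p : Fin m → Fin n → ℝ) (ω : Fin s → Fin m × Fin n) : Matrix (Fin m) (Fin n) ℝ :=
  (s : ℝ)⁻¹ • ∑ t : Fin s,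
    (X (ω t).1 (ω t).2 / p (ω t).1 (ω t).2) • Matrix.single (ω t).1 (ω t).2 (1 : ℝ)

/-- Probability, over `s` i.i.d. index samples drawn according to `p`, of the event `E`. -/
noncomputable def sampleProb {m n s : ℕ} (p : Fin m → Fin n → ℝ)
    (E : (Fin s → Fin m × Fin n) → Prop) : ℝ :=
  ∑ ω : Fin s → Fin m × Fin n,
    Set.indicator {ω | E ω} (fun ω => ∏ t, p (ω t).1 (ω t).2) ω

lemma my_sum_mulVec {m n : ℕ} {ι : Type*} (s : Finset ι) (f : ι → Matrix (Fin m) (Fin n) ℝ)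
    (y : Fin n → ℝ) : (∑ i ∈ s, f i) *ᵥ y = ∑ i ∈ s, f i *ᵥ y := by
  induction s using Finset.cons_induction with
  | empty => simp
  | cons a s ha ih => simp [Finset.sum_cons, Matrix.add_mulVec, ih]

lemma my_sum_dotProduct {m : ℕ} {ι : Type*} (s : Finset ι) (f : ι → Fin m → ℝ)
    (y : Fin m → ℝ) : (∑ i ∈ s, f i) ⬝ᵥ y = ∑ i ∈ s, f i ⬝ᵥ y := by
  induction s using Finset.cons_induction with
  | empty => simp
  | cons a s ha ih => simp [Finset.sum_cons, add_dotProduct, ih]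

lemma quadform_opNorm_le {n : ℕ} (A : Matrix (Fin n) (Fin n) ℝ) (c : ℝ) (hc : 0 ≤ c)
    (hsym : Aᵀ = A)
    (h0 : ∀ y : Fin n → ℝ, 0 ≤ (A *ᵥ y) ⬝ᵥ y)
    (hub : ∀ y : Fin n → ℝ, (A *ᵥ y) ⬝ᵥ y ≤ c * (y ⬝ᵥ y)) :
    ‖LinearMap.toContinuousLinearMap (Matrix.toEuclideanLin A)‖ ≤ c := by
  have hdnn : ∀ u : Fin n → ℝ, 0 ≤ u ⬝ᵥ u := fun u =>
    Finset.sum_nonneg fun i _ => mul_self_nonneg _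
  have hb : ∀ u w : Fin n → ℝ, (A *ᵥ w) ⬝ᵥ u = (A *ᵥ u) ⬝ᵥ w := by
    intro u w
    rw [dotProduct_comm, Matrix.dotProduct_mulVec, ← Matrix.mulVec_transpose, hsym]
  have KI : ∀ u w : Fin n → ℝ, 4 * ((A *ᵥ u) ⬝ᵥ w) ≤ 2 * c * (u ⬝ᵥ u + w ⬝ᵥ w) := by
    intro u w
    have h1 := hub (u + w)
    have h2 := h0 (u - w)
    have e1 : (A *ᵥ (u + w)) ⬝ᵥ (u + w)
        = (A *ᵥ u) ⬝ᵥ u + 2 * ((A *ᵥ u) ⬝ᵥ w) + (A *ᵥ w) ⬝ᵥ w := by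
      rw [Matrix.mulVec_add, add_dotProduct, dotProduct_add,
        dotProduct_add, hb u w]; ring
    have e2 : (A *ᵥ (u - w)) ⬝ᵥ (u - w)
        = (A *ᵥ u) ⬝ᵥ u - 2 * ((A *ᵥ u) ⬝ᵥ w) + (A *ᵥ w) ⬝ᵥ w := by
      rw [Matrix.mulVec_sub, sub_dotProduct, dotProduct_sub,
        dotProduct_sub, hb u w]; ring
    have e3 : (u + w) ⬝ᵥ (u + w) = u ⬝ᵥ u + 2 * (u ⬝ᵥ w) + w ⬝ᵥ w := by
      rw [add_dotProduct, dotProduct_add, dotProduct_add,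
        dotProduct_comm w u]; ring
    have e4 : 0 ≤ (u - w) ⬝ᵥ (u - w) := hdnn _
    have e5 : (u - w) ⬝ᵥ (u - w) = u ⬝ᵥ u - 2 * (u ⬝ᵥ w) + w ⬝ᵥ w := by
      rw [sub_dotProduct, dotProduct_sub, dotProduct_sub,
        dotProduct_comm w u]; ring
    rw [e1, e3] at h1
    rw [e2] at h2
    have e6 : 2 * (u ⬝ᵥ w) ≤ u ⬝ᵥ u + w ⬝ᵥ w := by rw [e5] at e4; linarith
    nlinarith [mul_le_mul_of_nonneg_left e6 hc]
  have hsq : ∀ u : Fin n → ℝ, (A *ᵥ u) ⬝ᵥ (A *ᵥ u) ≤ c ^ 2 * (u ⬝ᵥ u) := by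
    intro u
    set v := A *ᵥ u with hv
    have hs0 : 0 ≤ v ⬝ᵥ v := hdnn v
    rcases eq_or_lt_of_le hc with hc0 | hc0
    · have := KI u v
      rw [← hc0] at this
      nlinarith [hdnn u]
    · have hKI := KI (c • u) v
      rw [Matrix.mulVec_smul, smul_dotProduct, smul_dotProduct,
        dotProduct_smul] at hKI
      simp only [smul_eq_mul, ← hv] at hKI
      nlinarith [hKI, hc0, hdnn u]
  apply ContinuousLinearMap.opNorm_le_bound _ hc
  intro x
  have hx : ‖x‖ ^ 2 = (x : Fin n → ℝ) ⬝ᵥ (x : Fin n → ℝ) := by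
    rw [EuclideanSpace.norm_eq, Real.sq_sqrt (by positivity)]
    simp [dotProduct, Real.norm_eq_abs, sq_abs, sq]
  have hTx : ‖(LinearMap.toContinuousLinearMap (Matrix.toEuclideanLin A)) x‖ ^ 2
      = (A *ᵥ (x : Fin n → ℝ)) ⬝ᵥ (A *ᵥ (x : Fin n → ℝ)) := by
    rw [EuclideanSpace.norm_eq, Real.sq_sqrt (by positivity)]
    simp only [Real.norm_eq_abs, sq_abs, LinearMap.coe_toContinuousLinearMap',
      Matrix.toEuclideanLin_apply, PiLp.toLp_apply, dotProduct, sq, abs_mul_abs_self]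
  nlinarith [hsq (x : Fin n → ℝ), norm_nonneg ((LinearMap.toContinuousLinearMap (Matrix.toEuclideanLin A)) x),
    norm_nonneg x, mul_nonneg hc (norm_nonneg x)]

/-- With M = (X_IJ / p_IJ) e_I e_Jᵀ − X for a random pair (I,J) ∼ p,
‖E[Mᵀ M]‖₂ ≤ (2m/β) ‖X‖_F². -/
theorem bound_expectation_MTM {m n : ℕ} (X : Matrix (Fin m) (Fin n) ℝ)
    (β : ℝ) (hβ0 : 0 < β) (hβ1 : β ≤ 1)
    (p : Fin m → Fin n → ℝ) (hp0 : ∀ i j, 0 ≤ p i j) (hpsum : ∑ i, ∑ j, p i j = 1)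
    (hplb : ∀ i j, p i j ≥ (β / 2) *
      ((X i j) ^ 2 / (frobNorm X) ^ 2 + |X i j| / ∑ k, ∑ l, |X k l|)) :
    specNorm (∑ i, ∑ j, p i j •
        (((X i j / p i j) • Matrix.single i j (1 : ℝ) - X)ᵀ *
          ((X i j / p i j) • Matrix.single i j (1 : ℝ) - X)))
      ≤ (2 * m / β) * (frobNorm X) ^ 2 := by
  have hF2 : frobNorm X ^ 2 = ∑ i, ∑ j, X i j ^ 2 := by
    rw [frobNorm, Real.sq_sqrt (by positivity)]
  -- zero probability forces zero entry
  have hX0 : ∀ i j, p i j = 0 → X i j = 0 := by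
    intro i j hpij
    by_contra hx
    have h1 : 0 < |X i j| := abs_pos.mpr hx
    have h2 : |X i j| ≤ ∑ k, ∑ l, |X k l| := by
      calc |X i j| ≤ ∑ l, |X i l| :=
            Finset.single_le_sum (f := fun l => |X i l|)
              (fun _ _ => abs_nonneg _) (Finset.mem_univ j)
        _ ≤ ∑ k, ∑ l, |X k l| :=
            Finset.single_le_sum (f := fun k => ∑ l, |X k l|)
              (fun k _ => Finset.sum_nonneg fun _ _ => abs_nonneg _) (Finset.mem_univ i)
    have h3 : 0 < |X i j| / ∑ k, ∑ l, |X k l| := div_pos h1 (lt_of_lt_of_le h1 h2)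
    have h4 : 0 ≤ X i j ^ 2 / frobNorm X ^ 2 := div_nonneg (sq_nonneg _) (sq_nonneg _)
    have h5 := hplb i j
    nlinarith
  have hpa : ∀ i j, p i j * (X i j / p i j) = X i j := by
    intro i j; by_cases h : p i j = 0
    · simp [h, hX0 i j h]
    · field_simp
  have hpa2 : ∀ i j, p i j * (X i j / p i j) ^ 2 = X i j ^ 2 / p i j := by
    intro i j; by_cases h : p i j = 0
    · simp [h, hX0 i j h]
    · field_simp
  -- entrywise bound
  have hib : ∀ i j, X i j ^ 2 / p i j ≤ 2 * frobNorm X ^ 2 / β := by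
    intro i j
    by_cases hx : X i j = 0
    · simp only [hx]
      rw [zero_pow (by norm_num), zero_div]
      positivity
    · have hx2 : 0 < X i j ^ 2 := by positivity
      have hF2pos : 0 < frobNorm X ^ 2 := by
        rw [hF2]
        refine lt_of_lt_of_le hx2 ?_
        calc X i j ^ 2 ≤ ∑ l, X i l ^ 2 :=
              Finset.single_le_sum (f := fun l => X i l ^ 2)
                (fun _ _ => sq_nonneg _) (Finset.mem_univ j)
          _ ≤ ∑ k, ∑ l, X k l ^ 2 :=
              Finset.single_le_sum (f := fun k => ∑ l, X k l ^ 2)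
                (fun _ _ => Finset.sum_nonneg fun _ _ => sq_nonneg _) (Finset.mem_univ i)
      have h4 : 0 ≤ |X i j| / ∑ k, ∑ l, |X k l| := by
        apply div_nonneg (abs_nonneg _)
        exact Finset.sum_nonneg fun _ _ => Finset.sum_nonneg fun _ _ => abs_nonneg _
      have hlb : β / 2 * (X i j ^ 2 / frobNorm X ^ 2) ≤ p i j := by
        have h5 := hplb i j; nlinarith
      have hlb0 : 0 < β / 2 * (X i j ^ 2 / frobNorm X ^ 2) := by positivity
      calc X i j ^ 2 / p i j ≤ X i j ^ 2 / (β / 2 * (X i j ^ 2 / frobNorm X ^ 2)) :=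
            div_le_div_of_nonneg_left (le_of_lt hx2) hlb0 hlb
        _ = 2 * frobNorm X ^ 2 / β := by field_simp
  set N : Fin m → Fin n → Matrix (Fin m) (Fin n) ℝ :=
    fun i j => (X i j / p i j) • Matrix.single i j (1 : ℝ) - X with hN
  set S : Matrix (Fin n) (Fin n) ℝ := ∑ i, ∑ j, p i j • ((N i j)ᵀ * N i j) with hS
  have hSsym : Sᵀ = S := by
    rw [hS]
    simp [Matrix.transpose_sum, Matrix.transpose_smul, Matrix.transpose_mul]
  -- quadratic form as a sum
  have hmul : ∀ y : Fin n → ℝ,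
      (S *ᵥ y) ⬝ᵥ y = ∑ i, ∑ j, p i j * ((N i j *ᵥ y) ⬝ᵥ (N i j *ᵥ y)) := by
    intro y
    rw [hS, my_sum_mulVec, my_sum_dotProduct]
    refine Finset.sum_congr rfl fun i _ => ?_
    rw [my_sum_mulVec, my_sum_dotProduct]
    refine Finset.sum_congr rfl fun j _ => ?_
    rw [Matrix.smul_mulVec, smul_dotProduct, smul_eq_mul,
      ← Matrix.mulVec_mulVec, Matrix.mulVec_transpose, ← Matrix.dotProduct_mulVec,
      dotProduct_comm]
  have hq0 : ∀ y : Fin n → ℝ, 0 ≤ (S *ᵥ y) ⬝ᵥ y := by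
    intro y
    rw [hmul y]
    refine Finset.sum_nonneg fun i _ => Finset.sum_nonneg fun j _ => ?_
    exact mul_nonneg (hp0 i j) (Finset.sum_nonneg fun k _ => mul_self_nonneg _)
  -- exact form of each term
  have htermeq : ∀ (y : Fin n → ℝ) i j,
      p i j * ((N i j *ᵥ y) ⬝ᵥ (N i j *ᵥ y))
        = X i j ^ 2 / p i j * y j ^ 2 - 2 * X i j * y j * (X *ᵥ y) i
          + p i j * ((X *ᵥ y) ⬝ᵥ (X *ᵥ y)) := by
    intro y i j
    have hNy : N i j *ᵥ y
        = (X i j / p i j) • ((Matrix.single i j (1 : ℝ)) *ᵥ y) - X *ᵥ y := by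
      rw [hN]
      rw [Matrix.sub_mulVec, Matrix.smul_mulVec]
    have hEy : (Matrix.single i j (1 : ℝ)) *ᵥ y
        = Function.update (0 : Fin m → ℝ) i (y j) := by
      rw [Matrix.single_mulVec, one_mul]
    have hEE : ((Matrix.single i j (1 : ℝ)) *ᵥ y) ⬝ᵥ
        ((Matrix.single i j (1 : ℝ)) *ᵥ y) = y j ^ 2 := by
      rw [hEy]
      simp [dotProduct, Function.update_apply, sq]
    have hEw : ((Matrix.single i j (1 : ℝ)) *ᵥ y) ⬝ᵥ (X *ᵥ y) = y j * (X *ᵥ y) i := by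
      rw [hEy]
      simp [dotProduct, Function.update_apply]
    have hexp : (N i j *ᵥ y) ⬝ᵥ (N i j *ᵥ y)
        = (X i j / p i j) ^ 2 * y j ^ 2 - 2 * (X i j / p i j) * (y j * (X *ᵥ y) i)
          + (X *ᵥ y) ⬝ᵥ (X *ᵥ y) := by
      rw [hNy]
      simp only [sub_dotProduct, dotProduct_sub, smul_dotProduct,
        dotProduct_smul, smul_eq_mul,
        dotProduct_comm (X *ᵥ y) ((Matrix.single i j (1:ℝ)) *ᵥ y), hEE, hEw]
      ring
    rw [hexp]
    have e1 := hpa i j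
    have e2 := hpa2 i j
    linear_combination y j ^ 2 * e2 - 2 * y j * (X *ᵥ y) i * e1
  have hw : ∀ y : Fin n → ℝ, ∀ i, (X *ᵥ y) i = ∑ j, X i j * y j := by
    intro y i; simp [Matrix.mulVec, dotProduct]
  have hq_eq : ∀ y : Fin n → ℝ,
      (S *ᵥ y) ⬝ᵥ y = (∑ i, ∑ j, X i j ^ 2 / p i j * y j ^ 2)
        - (X *ᵥ y) ⬝ᵥ (X *ᵥ y) := by
    intro y
    rw [hmul y]
    rw [Finset.sum_congr rfl fun i _ => Finset.sum_congr rfl fun j _ => htermeq y i j]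
    have h2 : ∑ i, ∑ j, (2 * X i j * y j * (X *ᵥ y) i) = 2 * ((X *ᵥ y) ⬝ᵥ (X *ᵥ y)) := by
      rw [dotProduct, Finset.mul_sum]
      refine Finset.sum_congr rfl fun i _ => ?_
      calc ∑ j, 2 * X i j * y j * (X *ᵥ y) i
          = (∑ j, X i j * y j) * (2 * (X *ᵥ y) i) := by
            rw [Finset.sum_mul]
            exact Finset.sum_congr rfl fun j _ => by ring
        _ = 2 * ((X *ᵥ y) i * (X *ᵥ y) i) := by rw [← hw y i]; ring
    have h3 : ∑ i, ∑ j, p i j * ((X *ᵥ y) ⬝ᵥ (X *ᵥ y)) = (X *ᵥ y) ⬝ᵥ (X *ᵥ y) := by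
      simp_rw [← Finset.sum_mul]
      rw [hpsum, one_mul]
    simp only [Finset.sum_add_distrib, Finset.sum_sub_distrib]
    rw [h2, h3]
    ring
  have hqub : ∀ y : Fin n → ℝ, (S *ᵥ y) ⬝ᵥ y ≤ (2 * m / β * frobNorm X ^ 2) * (y ⬝ᵥ y) := by
    intro y
    rw [hq_eq y]
    have hw2 : 0 ≤ (X *ᵥ y) ⬝ᵥ (X *ᵥ y) := Finset.sum_nonneg fun k _ => mul_self_nonneg _
    have hsum : (∑ i, ∑ j, X i j ^ 2 / p i j * y j ^ 2)
        ≤ ∑ i : Fin m, ∑ j, 2 * frobNorm X ^ 2 / β * y j ^ 2 := by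
      refine Finset.sum_le_sum fun i _ => Finset.sum_le_sum fun j _ => ?_
      exact mul_le_mul_of_nonneg_right (hib i j) (sq_nonneg _)
    have hconst : ∑ i : Fin m, ∑ j, 2 * frobNorm X ^ 2 / β * y j ^ 2
        = (2 * m / β * frobNorm X ^ 2) * (y ⬝ᵥ y) := by
      rw [Finset.sum_const, Finset.card_univ, Fintype.card_fin, nsmul_eq_mul,
        dotProduct, Finset.mul_sum, Finset.mul_sum]
      exact Finset.sum_congr rfl fun j _ => by field_simp
    linarith
  have hc : (0:ℝ) ≤ 2 * m / β * frobNorm X ^ 2 := by positivity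
  exact quadform_opNorm_le S _ hc hSsym hq0 hqub
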